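/- Assume r > 1/2 (equivalently n ≥ m) and 0 < d < r. Then the eigenvalue system (EV) admits a unique positive eigenvalue λ (i.e. a unique λ > 0 for which there exists x ∈ ℝ^{n+m} with (λ, x) a solution of (EV)), given by λ = min( d/(1+ρ), 1/4, (r−d)/(2r−1+ρ) ). -/

import Mathlib

/-!
Along each road, the slack `c i = ā_i + x (i + 1) - x i` of (EV) turns the interior equations
into `λ = min (1 - c (i - 1)) (c i)`, and the sum of all slacks eliminates `x`, leaving one
balance equation in `S = ∑ a i`. For `λ > 0` the second road is forced to be saturated
(`c ≡ 1 - λ`), all slacks lie in `[λ, 1 - λ]` and the junction gives `λ ≤ 1/4`; the balance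
then yields `(n + m) λ ≤ S` and `(n - m + 2) λ ≤ n - S`. On the first road either the last slack
is `1 - λ`, and the whole road is saturated, or the junction forces `λ = 1/4`, or the first
slack is `λ` and the whole road is empty; this makes one of the three inequalities an equality,
so `λ` is their minimum. Conversely, each of these profiles (a clamped ramp when `λ = 1/4`)
gives a solution. With `d / (1 + ρ) = S / (n + m)` and
`(r - d) / (2 r - 1 + ρ) = (n - S) / (n - m + 2)` this is the claimed formula.
-/

open Finset

/-- The eigenvalue system (EV) for the 2D-traffic dynamics: `lam` is the
additive eigenvalue and `x : ℕ → ℝ` carries the coordinates `x 1, …, x (n+m)`. -/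
def EVsol (n m : ℕ) (a : ℕ → ℝ) (lam : ℝ) (x : ℕ → ℝ) : Prop :=
  (∀ i : ℕ, ((2 ≤ i ∧ i ≤ n - 1) ∨ (n + 2 ≤ i ∧ i ≤ n + m - 1)) →
      lam + x i = min (a (i - 1) + x (i - 1)) ((1 - a i) + x (i + 1))) ∧
  lam + x n = min ((1 - (a n + a (n + m))) + x 1 + x (n + 1) - lam - x (n + m))
      (a (n - 1) + x (n - 1)) ∧
  lam + x (n + m) = min ((1 - (a n + a (n + m))) + x 1 + x (n + 1) - x n)
      (a (n + m - 1) + x (n + m - 1)) ∧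
  lam + x 1 = min (a n + (x n + x (n + m)) / 2) ((1 - a 1) + x 2) ∧
  lam + x (n + 1) = min (a (n + m) + (x n + x (n + m)) / 2) ((1 - a (n + 1)) + x (n + 2))

theorem eq_min_min_iff {α : Type*} [LinearOrder α] {a x y z : α} :
    a = min x (min y z) ↔ (a ≤ x ∧ a ≤ y ∧ a ≤ z) ∧ (a = x ∨ a = y ∨ a = z) := by
  grind

theorem eq_min_min_div_iff {A B S T q lam : ℝ} (hA : 0 < A) (hB : 0 < B) :
    lam = min (S / A) (min q (T / B)) ↔
      (A * lam ≤ S ∧ lam ≤ q ∧ B * lam ≤ T) ∧ (A * lam = S ∨ lam = q ∨ B * lam = T) := by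
  rw [eq_min_min_iff, le_div_iff₀ hA, le_div_iff₀ hB, eq_div_iff hA.ne', eq_div_iff hB.ne',
    mul_comm lam A, mul_comm lam B]

theorem add_eq_min_iff_of_sub_eq {lam y u v u' v' : ℝ} (hu : u - y = u') (hv : v - y = v') :
    lam + y = min u v ↔ lam = min u' v' := by
  rw [← hu, ← hv, min_sub_sub_right, eq_sub_iff_add_eq]

theorem sum_Ico_const_real (x : ℝ) {a b : ℕ} (h : a ≤ b) :
    ∑ _i ∈ Ico a b, x = ((b : ℝ) - a) * x := by
  rw [sum_const, Nat.card_Ico, nsmul_eq_mul, Nat.cast_sub h]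

theorem sum_Icc_one_add_eq (a : ℕ → ℝ) {n m : ℕ} (hn : 1 ≤ n) (hm : 1 ≤ m) :
    ∑ i ∈ Icc 1 (n + m), a i =
      ∑ i ∈ Ico 1 n, a i + a n + ∑ i ∈ Ico (n + 1) (n + m), a i + a (n + m) := by
  rw [← Ico_add_one_right_eq_Icc, ← sum_Ico_consecutive _ hn (by omega : n ≤ n + m + 1),
    ← sum_Ico_consecutive _ (by omega : n ≤ n + 1) (by omega : n + 1 ≤ n + m + 1),
    sum_Ico_succ_top (by omega : n + 1 ≤ n + m), Nat.Ico_succ_singleton, sum_singleton]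
  ring

def IsRoad (lam : ℝ) (c : ℕ → ℝ) (s e : ℕ) : Prop :=
  ∀ i, s < i → i < e → lam = min (1 - c (i - 1)) (c i)

namespace IsRoad

variable {lam : ℝ} {c : ℕ → ℝ} {s e : ℕ}

theorem mem_Icc (h : IsRoad lam c s e) (hs : lam ≤ c s) (he : c (e - 1) ≤ 1 - lam) :
    ∀ i ∈ Ico s e, lam ≤ c i ∧ c i ≤ 1 - lam := by
  intro i hi
  rw [mem_Ico] at hi
  constructor
  · rcases hi.1.eq_or_lt with rfl | hsi
    · exact hs
    · exact (h i hsi hi.2).le.trans (min_le_right _ _)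
  · rcases (Nat.le_sub_one_of_lt hi.2).eq_or_lt with rfl | hie
    · exact he
    · have := (h (i + 1) (by omega) (by omega)).le.trans (min_le_left _ _)
      rw [Nat.add_sub_cancel] at this
      linarith

theorem eq_one_sub_of_last (h : IsRoad lam c s e) (hlam : lam < 1 / 2)
    (he : c (e - 1) = 1 - lam) : ∀ i ∈ Ico s e, c i = 1 - lam := by
  intro i hi
  rw [mem_Ico] at hi
  refine Nat.decreasingInduction' (fun k hk hik hk1 => ?_) (Nat.le_sub_one_of_lt hi.2) he
  have hk := h (k + 1) (by omega) (by omega)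
  rw [Nat.add_sub_cancel, hk1] at hk
  rcases min_eq_iff.1 hk.symm with ⟨h1, _⟩ | ⟨h2, _⟩ <;> linarith

theorem eq_of_first (h : IsRoad lam c s e) (hlam : lam < 1 / 2)
    (hs : c s = lam) : ∀ i ∈ Ico s e, c i = lam := by
  intro i hi
  rw [mem_Ico] at hi
  induction i, hi.1 using Nat.le_induction with
  | base => exact hs
  | succ k hsk ih =>
    have hk := h (k + 1) (by omega) hi.2
    rw [Nat.add_sub_cancel, ih ⟨hsk, by omega⟩] at hk
    rcases min_eq_iff.1 hk.symm with ⟨h1, _⟩ | ⟨h2, _⟩ <;> linarith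

end IsRoad

theorem isRoad_const {lam : ℝ} (hlam : lam ≤ 1 / 2) (s e : ℕ) : IsRoad lam (fun _ => lam) s e :=
  fun _ _ _ => (min_eq_right (by linarith)).symm

theorem isRoad_const_one_sub {lam : ℝ} (hlam : lam ≤ 1 / 2) (s e : ℕ) :
    IsRoad lam (fun _ => 1 - lam) s e :=
  fun _ _ _ => by rw [sub_sub_cancel, min_eq_left (by linarith)]

/-- A descending ramp clamped to `[lam, 1 - lam]`; its slope `1 - 2 * lam` is the width of that
interval, so of two consecutive values the first is `1 - lam` or the second is `lam`. -/
def ramp (lam t : ℝ) (i : ℕ) : ℝ := max lam (min (1 - lam) (t - (1 - 2 * lam) * i))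

theorem ramp_mem_Icc {lam : ℝ} (hlam : lam ≤ 1 / 2) (t : ℝ) (i : ℕ) :
    lam ≤ ramp lam t i ∧ ramp lam t i ≤ 1 - lam :=
  ⟨le_max_left _ _, max_le (by linarith) (min_le_left _ _)⟩

theorem isRoad_ramp {lam : ℝ} (hlam : lam ≤ 1 / 2) (t : ℝ) (s e : ℕ) :
    IsRoad lam (ramp lam t) s e := by
  intro i hsi _
  obtain ⟨k, rfl⟩ : ∃ k, i = k + 1 := ⟨i - 1, by omega⟩
  have hk := ramp_mem_Icc hlam t k
  have hk1 := ramp_mem_Icc hlam t (k + 1)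
  rw [Nat.add_sub_cancel]
  rcases le_or_gt (1 - lam) (t - (1 - 2 * lam) * k) with hu | hu
  · have : ramp lam t k = 1 - lam := by rw [ramp, min_eq_left hu, max_eq_right (by linarith)]
    rw [this, sub_sub_cancel, min_eq_left hk1.1]
  · have : ramp lam t (k + 1) = lam := by
      rw [ramp, max_eq_left]
      push_cast
      exact (min_le_right _ _).trans (by linarith)
    rw [this, min_eq_right (by linarith)]

theorem exists_sum_ramp_eq {lam C : ℝ} (hlam : lam ≤ 1 / 2) (s : Finset ℕ)
    (hlo : #s * lam ≤ C) (hhi : C ≤ #s * (1 - lam)) : ∃ t, ∑ i ∈ s, ramp lam t i = C := by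
  set K : ℝ := ∑ i ∈ s, (i : ℝ)
  have hK : ∀ i ∈ s, (i : ℝ) ≤ K := fun i hi =>
    single_le_sum (f := fun i : ℕ => (i : ℝ)) (fun _ _ => Nat.cast_nonneg _) hi
  have hw : 0 ≤ 1 - 2 * lam := by linarith
  have hbot : ∑ i ∈ s, ramp lam lam i = #s * lam := by
    rw [← nsmul_eq_mul, ← sum_const]
    refine sum_congr rfl fun i _ => max_eq_left ((min_le_right _ _).trans ?_)
    nlinarith [(Nat.cast_nonneg i : (0 : ℝ) ≤ i)]
  have htop : ∑ i ∈ s, ramp lam (1 - lam + (1 - 2 * lam) * K) i = #s * (1 - lam) := by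
    rw [← nsmul_eq_mul, ← sum_const]
    refine sum_congr rfl fun i hi => ?_
    rw [ramp, min_eq_left, max_eq_right (by linarith)]
    nlinarith [hK i hi]
  have hcont : Continuous fun t => ∑ i ∈ s, ramp lam t i := by
    unfold ramp; fun_prop
  have hle : lam ≤ 1 - lam + (1 - 2 * lam) * K := by
    nlinarith [sum_nonneg fun i (_ : i ∈ s) => (Nat.cast_nonneg i : (0 : ℝ) ≤ i)]
  obtain ⟨t, _, ht⟩ := intermediate_value_Icc hle hcont.continuousOn
    (by rw [hbot, htop]; exact ⟨hlo, hhi⟩)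
  exact ⟨t, ht⟩

/-- The system (EV) in slack variables: for a solution `x`, the slack of cell `i` is
`c i = ā_i + x (i + 1) - x i` (`c₁` on the first road, cells `1, …, n - 1`; `c₂` on the
second, cells `n + 1, …, n + m - 1`), and `p`, `p'` are the arguments `a n + x̄ - x 1`,
`a (n + m) + x̄ - x (n + 1)` of the junction minima, where `x̄ = (x n + x (n + m)) / 2`.
Summing the slacks eliminates `x`; only `S = ∑ a i` remains, in `balance`. -/
structure IsSlackSolution (n m : ℕ) (S lam p p' : ℝ) (c₁ c₂ : ℕ → ℝ) : Prop where
  road₁ : IsRoad lam c₁ 1 n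
  road₂ : IsRoad lam c₂ (n + 1) (n + m)
  entry₁ : lam = min p (c₁ 1)
  entry₂ : lam = min p' (c₂ (n + 1))
  exit₁ : lam = min (1 - p - p' - lam) (1 - c₁ (n - 1))
  exit₂ : lam = min (1 - p - p') (1 - c₂ (n + m - 1))
  balance : S + ∑ i ∈ Ico 1 n, c₁ i + ∑ i ∈ Ico (n + 1) (n + m), c₂ i = n + m - 2 + p + p'

namespace IsSlackSolution

variable {n m : ℕ} {S lam p p' : ℝ} {c₁ c₂ : ℕ → ℝ}

theorem le_entry₁ (h : IsSlackSolution n m S lam p p' c₁ c₂) : lam ≤ p :=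
  h.entry₁.le.trans (min_le_left _ _)

theorem le_entry₂ (h : IsSlackSolution n m S lam p p' c₁ c₂) : lam ≤ p' :=
  h.entry₂.le.trans (min_le_left _ _)

theorem two_mul_le_exit (h : IsSlackSolution n m S lam p p' c₁ c₂) : 2 * lam ≤ 1 - p - p' := by
  linarith [h.exit₁.le.trans (min_le_left _ _)]

theorem le_quarter (h : IsSlackSolution n m S lam p p' c₁ c₂) : lam ≤ 1 / 4 := by
  linarith [h.le_entry₁, h.le_entry₂, h.two_mul_le_exit]

theorem sum_road₁_mem_Icc (h : IsSlackSolution n m S lam p p' c₁ c₂) :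
    (#(Ico 1 n) : ℝ) * lam ≤ ∑ i ∈ Ico 1 n, c₁ i ∧
      ∑ i ∈ Ico 1 n, c₁ i ≤ (#(Ico 1 n) : ℝ) * (1 - lam) := by
  have hc := h.road₁.mem_Icc (h.entry₁.le.trans (min_le_right _ _))
    (by linarith [h.exit₁.le.trans (min_le_right _ _)])
  rw [← nsmul_eq_mul, ← nsmul_eq_mul]
  exact ⟨card_nsmul_le_sum _ _ _ fun i hi => (hc i hi).1,
    sum_le_card_nsmul _ _ _ fun i hi => (hc i hi).2⟩

theorem road₂_saturated (h : IsSlackSolution n m S lam p p' c₁ c₂) (hm : 2 ≤ m)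
    (hlam : 0 < lam) :
    ∑ i ∈ Ico (n + 1) (n + m), c₂ i = ((m : ℝ) - 1) * (1 - lam) ∧ p' = lam := by
  have hq := h.le_quarter
  have hlast : c₂ (n + m - 1) = 1 - lam := by
    rcases min_eq_iff.1 h.exit₂.symm with ⟨h1, _⟩ | ⟨h2, _⟩
    · linarith [h.two_mul_le_exit]
    · linarith
  have hall := h.road₂.eq_one_sub_of_last (by linarith) hlast
  have h₂ := h.entry₂
  rw [hall (n + 1) (by simp; omega)] at h₂
  refine ⟨?_, ?_⟩
  · rw [sum_congr rfl hall, sum_Ico_const_real _ (by omega)]; push_cast; ring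
  · rcases min_eq_iff.1 h₂.symm with ⟨h1, _⟩ | ⟨h2, _⟩ <;> linarith

theorem bounds (h : IsSlackSolution n m S lam p p' c₁ c₂) (hn : 2 ≤ n) (hm : 2 ≤ m)
    (hlam : 0 < lam) :
    (n + m) * lam ≤ S ∧ lam ≤ 1 / 4 ∧ (n - m + 2) * lam ≤ n - S := by
  obtain ⟨hC₂, hp'⟩ := h.road₂_saturated hm hlam
  obtain ⟨hlo, hhi⟩ := h.sum_road₁_mem_Icc
  rw [Nat.card_Ico, Nat.cast_sub (by omega), Nat.cast_one] at hlo hhi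
  have := h.balance
  refine ⟨?_, h.le_quarter, ?_⟩
  · linarith [h.le_entry₁]
  · linarith [h.two_mul_le_exit]

theorem cases (h : IsSlackSolution n m S lam p p' c₁ c₂) (hn : 2 ≤ n) (hm : 2 ≤ m)
    (hlam : 0 < lam) :
    (n + m) * lam = S ∨ lam = 1 / 4 ∨ (n - m + 2) * lam = n - S := by
  obtain ⟨hC₂, hp'⟩ := h.road₂_saturated hm hlam
  have hq := h.le_quarter
  have hbal := h.balance
  by_cases hlast : c₁ (n - 1) = 1 - lam
  · have h₁ := h.road₁.eq_one_sub_of_last (by linarith) hlast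
    have hp : p = lam := by
      have := h.entry₁
      rw [h₁ 1 (by simp; omega)] at this
      rcases min_eq_iff.1 this.symm with ⟨h1, _⟩ | ⟨h2, _⟩ <;> linarith
    rw [sum_congr rfl h₁, sum_Ico_const_real _ (by omega)] at hbal
    left; push_cast at hbal; linarith
  · have hp : p = 1 - 3 * lam := by
      rcases min_eq_iff.1 h.exit₁.symm with ⟨h1, _⟩ | ⟨h2, _⟩
      · linarith
      · exact absurd (by linarith) hlast
    have h₁ := h.entry₁
    rw [hp] at h₁
    rcases min_eq_iff.1 h₁.symm with ⟨h1, _⟩ | ⟨h2, _⟩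
    · right; left; linarith
    · have hall := h.road₁.eq_of_first (by linarith) h2
      rw [sum_congr rfl hall, sum_Ico_const_real _ (by omega)] at hbal
      right; right; push_cast at hbal; linarith

theorem eq_min (h : IsSlackSolution n m S lam p p' c₁ c₂) (hn : 2 ≤ n) (hm : 2 ≤ m)
    (hlam : 0 < lam) (hnm : (0 : ℝ) < n - m + 2) :
    lam = min (S / (n + m)) (min (1 / 4) ((n - S) / (n - m + 2))) :=
  (eq_min_min_div_iff (by positivity) hnm).2 ⟨h.bounds hn hm hlam, h.cases hn hm hlam⟩

theorem of_road₁ {f : ℕ → ℝ} (hm : 1 ≤ m) (hlam : lam ≤ 1 / 2) (hf : IsRoad lam f 1 n)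
    (h₁ : lam = min p (f 1)) (h₁' : lam = min (1 - p - lam - lam) (1 - f (n - 1)))
    (hp : p ≤ 1 - 2 * lam)
    (hbal : S + ∑ i ∈ Ico 1 n, f i + (m - 1) * (1 - lam) = n + m - 2 + p + lam) :
    IsSlackSolution n m S lam p lam f (fun _ => 1 - lam) where
  road₁ := hf
  road₂ := isRoad_const_one_sub hlam _ _
  entry₁ := h₁
  entry₂ := (min_eq_left (by linarith)).symm
  exit₁ := h₁'
  exit₂ := by rw [sub_sub_cancel, min_eq_right (by linarith)]
  balance := by
    rw [← hbal, sum_Ico_const_real _ (by omega)]; push_cast; ring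

end IsSlackSolution

theorem exists_isSlackSolution {n m : ℕ} {S lam : ℝ} (hn : 2 ≤ n) (hm : 2 ≤ m)
    (hnm : (0 : ℝ) < n - m + 2) (hpos : 0 < lam)
    (hlam : lam = min (S / (n + m)) (min (1 / 4) ((n - S) / (n - m + 2)))) :
    ∃ p p' c₁ c₂, IsSlackSolution n m S lam p p' c₁ c₂ := by
  obtain ⟨⟨hA, hq, hB⟩, hcase⟩ := (eq_min_min_div_iff (by positivity) hnm).1 hlam
  have hn1 : (#(Ico 1 n) : ℝ) = n - 1 := by
    rw [Nat.card_Ico, Nat.cast_sub (by omega), Nat.cast_one]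
  rcases hcase with hS | rfl | hS
  · refine ⟨lam, lam, fun _ => 1 - lam, fun _ => 1 - lam,
      .of_road₁ (by omega) (by linarith) (isRoad_const_one_sub (by linarith) _ _) ?_ ?_
        (by linarith) ?_⟩
    · rw [min_eq_left (by linarith)]
    · rw [sub_sub_cancel, min_eq_right (by linarith)]
    · rw [sum_Ico_const_real _ (by omega)]; push_cast; linarith
  · obtain ⟨t, ht⟩ := exists_sum_ramp_eq (lam := 1 / 4) (C := n + m / 4 - 3 / 4 - S)
      (by norm_num) (Ico 1 n) (by rw [hn1]; linarith) (by rw [hn1]; linarith)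
    have hr := ramp_mem_Icc (lam := 1 / 4) (by norm_num) t
    refine ⟨1 / 4, 1 / 4, ramp (1 / 4) t, fun _ => 1 - 1 / 4,
      .of_road₁ (by omega) (by norm_num) (isRoad_ramp (by norm_num) _ _ _) ?_ ?_
        (by norm_num) ?_⟩
    · rw [min_eq_left (hr 1).1]
    · rw [min_eq_left (by linarith [(hr (n - 1)).2])]; norm_num
    · rw [ht]; ring
  · refine ⟨1 - 3 * lam, lam, fun _ => lam, fun _ => 1 - lam,
      .of_road₁ (by omega) (by linarith) (isRoad_const (by linarith) _ _) ?_ ?_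
        (by linarith) ?_⟩
    · rw [min_eq_right (by linarith)]
    · rw [min_eq_left (by linarith)]; ring
    · rw [sum_Ico_const_real _ (by omega)]; push_cast; linarith

def slack (a x : ℕ → ℝ) (i : ℕ) : ℝ := 1 - a i + (x (i + 1) - x i)

theorem sum_Ico_slack (a x : ℕ → ℝ) {s e : ℕ} (h : s ≤ e) :
    ∑ i ∈ Ico s e, slack a x i = ((e : ℝ) - s) - ∑ i ∈ Ico s e, a i + (x e - x s) := by
  simp only [slack, sum_add_distrib, sum_sub_distrib, sum_Ico_sub x h,
    sum_Ico_const_real _ h]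
  ring

section Translation

variable {n m : ℕ} {a x c₁ c₂ : ℕ → ℝ} {lam p p' : ℝ}

theorem add_eq_min_iff_of_slack {i : ℕ} {c : ℕ → ℝ} (hi : 1 ≤ i)
    (hprev : c (i - 1) = slack a x (i - 1)) (hcur : c i = slack a x i) :
    lam + x i = min (a (i - 1) + x (i - 1)) ((1 - a i) + x (i + 1)) ↔
      lam = min (1 - c (i - 1)) (c i) :=
  add_eq_min_iff_of_sub_eq (by rw [hprev, slack, Nat.sub_add_cancel hi]; ring)
    (by rw [hcur, slack]; ring)

theorem EVsol_iff_slack (hn : 2 ≤ n) (hm : 2 ≤ m)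
    (hc₁ : ∀ i, 1 ≤ i → i < n → c₁ i = slack a x i)
    (hc₂ : ∀ i, n + 1 ≤ i → i < n + m → c₂ i = slack a x i)
    (hp : p = a n + (x n + x (n + m)) / 2 - x 1)
    (hp' : p' = a (n + m) + (x n + x (n + m)) / 2 - x (n + 1)) :
    EVsol n m a lam x ↔
      (IsRoad lam c₁ 1 n ∧ IsRoad lam c₂ (n + 1) (n + m)) ∧
        lam = min (1 - p - p' - lam) (1 - c₁ (n - 1)) ∧
        lam = min (1 - p - p') (1 - c₂ (n + m - 1)) ∧
        lam = min p (c₁ 1) ∧ lam = min p' (c₂ (n + 1)) := by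
  have road₁ : ∀ i, 1 < i → i < n → (lam + x i = min (a (i - 1) + x (i - 1))
      ((1 - a i) + x (i + 1)) ↔ lam = min (1 - c₁ (i - 1)) (c₁ i)) := fun i h1 h2 =>
    add_eq_min_iff_of_slack (by omega) (hc₁ _ (by omega) (by omega)) (hc₁ _ (by omega) h2)
  have road₂ : ∀ i, n + 1 < i → i < n + m → (lam + x i = min (a (i - 1) + x (i - 1))
      ((1 - a i) + x (i + 1)) ↔ lam = min (1 - c₂ (i - 1)) (c₂ i)) := fun i h1 h2 =>
    add_eq_min_iff_of_slack (by omega) (hc₂ _ (by omega) (by omega)) (hc₂ _ (by omega) h2)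
  have last₁ := hc₁ (n - 1) (by omega) (by omega)
  have last₂ := hc₂ (n + m - 1) (by omega) (by omega)
  rw [slack, Nat.sub_add_cancel (by omega)] at last₁ last₂
  have first₁ := hc₁ 1 le_rfl (by omega)
  have first₂ := hc₂ (n + 1) le_rfl (by omega)
  rw [slack] at first₁ first₂
  simp only [add_assoc, Nat.reduceAdd] at first₁ first₂
  subst hp hp'
  refine and_congr ⟨fun H => ⟨fun i h1 h2 => (road₁ i h1 h2).1 (H i (.inl ⟨by omega, by omega⟩)),
      fun i h1 h2 => (road₂ i h1 h2).1 (H i (.inr ⟨by omega, by omega⟩))⟩,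
    fun ⟨H₁, H₂⟩ i hi => ?_⟩ (and_congr ?_ (and_congr ?_ (and_congr ?_ ?_)))
  · rcases hi with hi | hi
    · exact (road₁ i (by omega) (by omega)).2 (H₁ i (by omega) (by omega))
    · exact (road₂ i (by omega) (by omega)).2 (H₂ i (by omega) (by omega))
  all_goals exact add_eq_min_iff_of_sub_eq (by linarith) (by linarith)

theorem EVsol.isSlackSolution (hn : 2 ≤ n) (hm : 2 ≤ m) (h : EVsol n m a lam x) :
    IsSlackSolution n m (∑ i ∈ Icc 1 (n + m), a i) lam
      (a n + (x n + x (n + m)) / 2 - x 1) (a (n + m) + (x n + x (n + m)) / 2 - x (n + 1))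
      (slack a x) (slack a x) := by
  obtain ⟨⟨road₁, road₂⟩, exit₁, exit₂, entry₁, entry₂⟩ :=
    (EVsol_iff_slack hn hm (fun _ _ _ => rfl) (fun _ _ _ => rfl) rfl rfl).1 h
  refine ⟨road₁, road₂, entry₁, entry₂, exit₁, exit₂, ?_⟩
  rw [sum_Icc_one_add_eq a (by omega) (by omega), sum_Ico_slack a x (by omega),
    sum_Ico_slack a x (by omega)]
  push_cast
  ring

theorem IsSlackSolution.exists_EVsol (hn : 2 ≤ n) (hm : 2 ≤ m)
    (h : IsSlackSolution n m (∑ i ∈ Icc 1 (n + m), a i) lam p p' c₁ c₂) :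
    ∃ x, EVsol n m a lam x := by
  set D₁ := ∑ j ∈ Ico 1 n, (a j + c₁ j - 1)
  set D₂ := ∑ j ∈ Ico (n + 1) (n + m), (a j + c₂ j - 1)
  set x₀ := 2 * (p - a n) - D₁ - D₂
  let x i := if i ≤ n then ∑ j ∈ Ico 1 i, (a j + c₁ j - 1)
    else x₀ + ∑ j ∈ Ico (n + 1) i, (a j + c₂ j - 1)
  have hx1 : x 1 = 0 := by simp only [x, if_pos (by omega : 1 ≤ n), Ico_self, sum_empty]
  have hxn : x n = D₁ := if_pos le_rfl
  have hxn1 : x (n + 1) = x₀ := by simp [x]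
  have hxnm : x (n + m) = x₀ + D₂ := if_neg (by omega)
  have hbal := h.balance
  rw [sum_Icc_one_add_eq a (by omega) (by omega)] at hbal
  have hD₁ : D₁ = ∑ j ∈ Ico 1 n, a j + ∑ j ∈ Ico 1 n, c₁ j - (n - 1) := by
    simp only [D₁, sum_sub_distrib, sum_add_distrib, sum_Ico_const_real _ (by omega : 1 ≤ n)]
    push_cast; ring
  have hD₂ : D₂ = ∑ j ∈ Ico (n + 1) (n + m), a j + ∑ j ∈ Ico (n + 1) (n + m), c₂ j - (m - 1) := by
    simp only [D₂, sum_sub_distrib, sum_add_distrib,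
      sum_Ico_const_real _ (by omega : n + 1 ≤ n + m)]
    push_cast; ring
  refine ⟨x, (EVsol_iff_slack hn hm (fun i h1 h2 => ?_) (fun i h1 h2 => ?_) ?_ ?_).2
    ⟨⟨h.road₁, h.road₂⟩, h.exit₁, h.exit₂, h.entry₁, h.entry₂⟩⟩
  · simp only [slack, x, if_pos h2.le, if_pos (show i + 1 ≤ n by omega), sum_Ico_succ_top h1]
    ring
  · simp only [slack, x, if_neg (show ¬ i ≤ n by omega), if_neg (show ¬ i + 1 ≤ n by omega),
      sum_Ico_succ_top h1]
    ring
  · rw [hx1, hxn, hxnm]; ring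
  · rw [hxn, hxnm, hxn1]; linarith

end Translation

theorem eigenvalue_formula_eq {n m S : ℝ} (hN : 0 < n + m - 1) :
    min (S / (n + m - 1) / (1 + 1 / (n + m - 1)))
        (min (1 / 4) ((n / (n + m - 1) - S / (n + m - 1)) /
          (2 * (n / (n + m - 1)) - 1 + 1 / (n + m - 1)))) =
      min (S / (n + m)) (min (1 / 4) ((n - S) / (n - m + 2))) := by
  have hden : 2 * (n / (n + m - 1)) - 1 + 1 / (n + m - 1) = (n - m + 2) / (n + m - 1) := by
    field_simp; ring
  have hS : S / (n + m - 1) / (1 + 1 / (n + m - 1)) = S / (n + m) := by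
    have : n + m ≠ 0 := by linarith
    field_simp; ring
  rw [← sub_div, hden, div_div_div_cancel_right₀ hN.ne', hS]

theorem stmt17_general (n m : ℕ) (hn : 2 ≤ n) (hm : 2 ≤ m) (a : ℕ → ℝ)
    (d r ρ : ℝ) (hd : d = (∑ i ∈ Finset.Icc 1 (n + m), a i) / ((n : ℝ) + (m : ℝ) - 1))
    (hr : r = (n : ℝ) / ((n : ℝ) + (m : ℝ) - 1))
    (hρ : ρ = 1 / ((n : ℝ) + (m : ℝ) - 1))
    (hr2 : 1 / 2 < r) (hd0 : 0 < d) (hdr : d < r)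
    (lam : ℝ)
    (hlam : lam = min (d / (1 + ρ)) (min (1 / 4) ((r - d) / (2 * r - 1 + ρ)))) :
    0 < lam ∧ (∃ x : ℕ → ℝ, EVsol n m a lam x) ∧
      ∀ lam' : ℝ, 0 < lam' →
        (∃ x : ℕ → ℝ, EVsol n m a lam' x) → lam' = lam := by
  set S := ∑ i ∈ Icc 1 (n + m), a i
  have hN : (0 : ℝ) < n + m - 1 := by
    have : (2 : ℝ) ≤ n := by exact_mod_cast hn
    have : (2 : ℝ) ≤ m := by exact_mod_cast hm
    linarith
  subst hd hr hρ
  rw [lt_div_iff₀ hN] at hr2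
  rw [div_lt_div_iff_of_pos_right hN] at hdr
  have hnm : (0 : ℝ) < n - m + 2 := by linarith
  have hS : 0 < S := (div_pos_iff_of_pos_right hN).1 hd0
  rw [eigenvalue_formula_eq hN] at hlam
  have hpos : 0 < lam := by
    rw [hlam]
    exact lt_min (by positivity) (lt_min (by norm_num) (div_pos (by linarith) hnm))
  refine ⟨hpos, ?_, fun lam' hlam' ⟨x, hx⟩ => ?_⟩
  · obtain ⟨p, p', c₁, c₂, h⟩ := exists_isSlackSolution hn hm hnm hpos hlam
    exact h.exists_EVsol hn hm
  · rw [hlam]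
    exact (hx.isSlackSolution hn hm).eq_min hn hm hlam' hnm

theorem stmt17 (n m : ℕ) (hn : 2 ≤ n) (hm : 2 ≤ m) (a : ℕ → ℝ)
    (ha : ∀ i : ℕ, 1 ≤ i → i ≤ n + m → 0 ≤ a i ∧ a i ≤ 1)
    (hprio : a n + a (n + m) ≤ 1)
    (d r ρ : ℝ) (hd : d = (∑ i ∈ Finset.Icc 1 (n + m), a i) / ((n : ℝ) + (m : ℝ) - 1))
    (hr : r = (n : ℝ) / ((n : ℝ) + (m : ℝ) - 1))
    (hρ : ρ = 1 / ((n : ℝ) + (m : ℝ) - 1))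
    (hr2 : 1 / 2 < r) (hd0 : 0 < d) (hdr : d < r)
    (lam : ℝ)
    (hlam : lam = min (d / (1 + ρ)) (min (1 / 4) ((r - d) / (2 * r - 1 + ρ)))) :
    0 < lam ∧ (∃ x : ℕ → ℝ, EVsol n m a lam x) ∧
      ∀ lam' : ℝ, 0 < lam' →
        (∃ x : ℕ → ℝ, EVsol n m a lam' x) → lam' = lam :=
  stmt17_general n m hn hm a d r ρ hd hr hρ hr2 hd0 hdr lam hlam
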